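/- Let Ω be a future-complete regular domain and p ∈ ∂Ω. Then p belongs to the singularity Σ (i.e. p = r(q) for some q ∈ Ω) if and only if there exist at least two distinct future-directed null rays starting at p contained in ∂Ω, equivalently iff there is a future-directed timelike vector u with p + u^⊥ a support plane of Ω. -/

import Mathlib

/-!
Write `Ω = {x | ⟨x - a, ℓ⟩ < 0 for (a, ℓ) ∈ Λ}` with future null normals `ℓ`. A future
timelike support vector `u` at `p` gives `p + u ∈ Ω`, so `p ∈ Σ`; and the sum of two
non-proportional future null support vectors is timelike. A future null support vector `z`
spans a null ray `p + ℝ₊z` in `∂Ω`, while a null ray `p + ℝ₊z` in `∂Ω` leaves `Ω` through a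
half-space whose normal is a multiple of `z` (reverse Cauchy–Schwarz). It remains to find,
given a timelike support vector `u`, two non-proportional null ones. An active half-space at
`p` gives one, `v`. For a direction `d` with `⟨d, u⟩ > 0 > ⟨d, v⟩` the points `p + t d` lie
outside `Ω`; the normalized null normals cutting them off accumulate, as `t → 0`, at a null
support vector `w` with `⟨d, w⟩ ≥ 0`, so `w` is not a multiple of `v`.
-/

/-- The Minkowski bilinear form on `ℝ^{n+1}`. -/
noncomputable def mink {n : ℕ} (v w : Fin (n+1) → ℝ) : ℝ :=
  (∑ i, v i * w i) - 2 * v 0 * w 0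

/-- A future-directed timelike vector. -/
def TimelikeFuture {n : ℕ} (v : Fin (n+1) → ℝ) : Prop :=
  mink v v < 0 ∧ 0 < v 0

/-- A future-directed null vector. -/
def NullFuture {n : ℕ} (v : Fin (n+1) → ℝ) : Prop :=
  mink v v = 0 ∧ v ≠ 0 ∧ 0 < v 0

/-- A future-complete regular domain. -/
def IsRegularDomain {n : ℕ} (Ω : Set (Fin (n+1) → ℝ)) : Prop :=
  IsOpen Ω ∧ Ω.Nonempty ∧
  ∃ Λ : Set ((Fin (n+1) → ℝ) × (Fin (n+1) → ℝ)),
    (∀ l ∈ Λ, NullFuture l.2) ∧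
    (∃ l₁ ∈ Λ, ∃ l₂ ∈ Λ, ∀ s : ℝ, l₂.2 ≠ s • l₁.2) ∧
    Ω = {x | ∀ l ∈ Λ, mink (x - l.1) l.2 < 0}

open Set Filter Topology

section Minkowski

variable {n : ℕ}

lemma mink_eq_sum_succ (v w : Fin (n+1) → ℝ) :
    mink v w = (∑ i : Fin n, v i.succ * w i.succ) - v 0 * w 0 := by
  simp only [mink, Fin.sum_univ_succ]; ring

lemma mink_self_eq_sum_succ (v : Fin (n+1) → ℝ) :
    mink v v = (∑ i : Fin n, v i.succ ^ 2) - v 0 ^ 2 := by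
  simp only [mink_eq_sum_succ, sq]

lemma mink_comm (v w : Fin (n+1) → ℝ) : mink v w = mink w v := by
  simp only [mink, mul_comm (v _) (w _)]; ring

lemma mink_add_left (u v w : Fin (n+1) → ℝ) : mink (u + v) w = mink u w + mink v w := by
  simp only [mink, Pi.add_apply, add_mul, Finset.sum_add_distrib]; ring

lemma mink_sub_left (u v w : Fin (n+1) → ℝ) : mink (u - v) w = mink u w - mink v w := by
  simp only [mink, Pi.sub_apply, sub_mul, Finset.sum_sub_distrib]; ring

lemma mink_smul_left (s : ℝ) (v w : Fin (n+1) → ℝ) : mink (s • v) w = s * mink v w := by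
  simp only [mink, Pi.smul_apply, smul_eq_mul, mul_assoc, ← Finset.mul_sum]; ring

lemma mink_add_right (u v w : Fin (n+1) → ℝ) : mink u (v + w) = mink u v + mink u w := by
  rw [mink_comm, mink_add_left, mink_comm v, mink_comm w]

lemma mink_smul_right (s : ℝ) (v w : Fin (n+1) → ℝ) : mink v (s • w) = s * mink v w := by
  rw [mink_comm, mink_smul_left, mink_comm]

@[simp]
lemma mink_zero_left (w : Fin (n+1) → ℝ) : mink 0 w = 0 := by
  simp [mink]

lemma mink_single_zero_left (w : Fin (n+1) → ℝ) : mink (Pi.single 0 1) w = -w 0 := by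
  simp [mink, Pi.single_apply]; ring

@[fun_prop]
lemma Continuous.mink {X : Type*} [TopologicalSpace X] {f g : X → Fin (n+1) → ℝ}
    (hf : Continuous f) (hg : Continuous g) : Continuous fun x => mink (f x) (g x) := by
  unfold _root_.mink; fun_prop

lemma mink_nonpos_of_causal {v w : Fin (n+1) → ℝ} (hv : mink v v ≤ 0) (hv0 : 0 < v 0)
    (hw : mink w w ≤ 0) (hw0 : 0 < w 0) : mink v w ≤ 0 := by
  rw [mink_self_eq_sum_succ] at hv hw
  rw [mink_eq_sum_succ]
  have hcs := Finset.sum_mul_sq_le_sq_mul_sq Finset.univ (fun i : Fin n => v i.succ)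
    (fun i => w i.succ)
  have hSv : 0 ≤ ∑ i : Fin n, v i.succ ^ 2 := by positivity
  have hsq : (∑ i : Fin n, v i.succ * w i.succ) ^ 2 ≤ (v 0 * w 0) ^ 2 := by
    rw [mul_pow]; exact hcs.trans (by gcongr <;> linarith)
  linarith [(abs_le_of_sq_le_sq' hsq (by positivity)).2]

lemma mink_neg_of_timelike_of_causal {v w : Fin (n+1) → ℝ} (hv : mink v v < 0)
    (hv0 : 0 < v 0) (hw : mink w w ≤ 0) (hw0 : 0 < w 0) : mink v w < 0 := by
  rw [mink_self_eq_sum_succ] at hv hw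
  rw [mink_eq_sum_succ]
  have hcs := Finset.sum_mul_sq_le_sq_mul_sq Finset.univ (fun i : Fin n => v i.succ)
    (fun i => w i.succ)
  have hSv : 0 ≤ ∑ i : Fin n, v i.succ ^ 2 := by positivity
  have hsq : (∑ i : Fin n, v i.succ * w i.succ) ^ 2 < (v 0 * w 0) ^ 2 :=
    calc _ ≤ (∑ i : Fin n, v i.succ ^ 2) * ∑ i : Fin n, w i.succ ^ 2 := hcs
      _ ≤ (∑ i : Fin n, v i.succ ^ 2) * w 0 ^ 2 := by gcongr; linarith
      _ < v 0 ^ 2 * w 0 ^ 2 := by gcongr; linarith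
      _ = (v 0 * w 0) ^ 2 := by ring
  linarith [(abs_lt_of_sq_lt_sq' hsq (by positivity)).2]

lemma exists_pos_smul_eq_of_mink_eq_zero {v w : Fin (n+1) → ℝ} (hv : NullFuture v)
    (hw : NullFuture w) (hvw : mink v w = 0) : ∃ s : ℝ, 0 < s ∧ w = s • v := by
  obtain ⟨hvv, -, hv0⟩ := hv
  obtain ⟨hww, -, hw0⟩ := hw
  rw [mink_self_eq_sum_succ] at hvv hww
  rw [mink_eq_sum_succ] at hvw
  have hsum : ∑ i : Fin n, (w 0 * v i.succ - v 0 * w i.succ) ^ 2 = 0 := by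
    have hterm : ∀ i : Fin n, (w 0 * v i.succ - v 0 * w i.succ) ^ 2 =
        w 0 ^ 2 * v i.succ ^ 2 - 2 * (v 0 * w 0) * (v i.succ * w i.succ)
          + v 0 ^ 2 * w i.succ ^ 2 := fun i => by ring
    simp only [hterm, Finset.sum_add_distrib, Finset.sum_sub_distrib, ← Finset.mul_sum]
    linear_combination (w 0 ^ 2) * hvv + (v 0 ^ 2) * hww - 2 * (v 0 * w 0) * hvw
  have hzero : ∀ i : Fin n, w 0 * v i.succ = v 0 * w i.succ := fun i =>
    sub_eq_zero.1 (pow_eq_zero_iff two_ne_zero |>.1 <|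
      (Finset.sum_eq_zero_iff_of_nonneg fun j _ => sq_nonneg _).1 hsum i (Finset.mem_univ i))
  refine ⟨w 0 / v 0, div_pos hw0 hv0, funext fun i => Fin.cases ?_ (fun j => ?_) i⟩
  · simp [hv0.ne']
  · simp only [Pi.smul_apply, smul_eq_mul]
    field_simp
    linarith [hzero j]

lemma norm_eq_abs_apply_zero_of_mink_self_nonpos {v : Fin (n+1) → ℝ} (hv : mink v v ≤ 0) :
    ‖v‖ = |v 0| := by
  refine le_antisymm ((pi_norm_le_iff_of_nonneg (abs_nonneg _)).2 fun i => ?_)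
    (by simpa using norm_le_pi_norm v 0)
  rw [Real.norm_eq_abs]
  refine Fin.cases le_rfl (fun j => sq_le_sq.1 ?_) i
  rw [mink_self_eq_sum_succ] at hv
  have := Finset.single_le_sum (fun i _ => sq_nonneg (v (Fin.succ i))) (Finset.mem_univ j)
  linarith

lemma isCompact_setOf_mink_self_eq_zero_apply_zero_eq_one :
    IsCompact {z : Fin (n+1) → ℝ | mink z z = 0 ∧ z 0 = 1} := by
  refine (isCompact_closedBall (0 : Fin (n+1) → ℝ) 1).of_isClosed_subset
    ((isClosed_eq (by fun_prop) continuous_const).inter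
      (isClosed_eq (continuous_apply 0) continuous_const)) ?_
  rintro z ⟨hzz, hz0⟩
  rw [mem_closedBall_zero_iff, norm_eq_abs_apply_zero_of_mink_self_nonpos hzz.le, hz0, abs_one]

lemma TimelikeFuture.add_of_nullFuture {v w : Fin (n+1) → ℝ} (hv : NullFuture v)
    (hw : NullFuture w) (hvw : ∀ s : ℝ, w ≠ s • v) : TimelikeFuture (v + w) := by
  have hle := mink_nonpos_of_causal hv.1.le hv.2.2 hw.1.le hw.2.2
  have hne : mink v w ≠ 0 := fun h =>
    let ⟨s, _, hs⟩ := exists_pos_smul_eq_of_mink_eq_zero hv hw h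
    hvw s hs
  refine ⟨?_, add_pos hv.2.2 hw.2.2⟩
  rw [mink_add_left, mink_add_right, mink_add_right, hv.1, hw.1, mink_comm w v]
  linarith [lt_of_le_of_ne hle hne]

end Minkowski

/-- `p + u^⊥` is a support plane of `Ω`, and `Ω` lies on the side `u` points to. -/
def IsSupportPlane {n : ℕ} (Ω : Set (Fin (n+1) → ℝ)) (p u : Fin (n+1) → ℝ) : Prop :=
  ∀ x ∈ closure Ω, mink (x - p) u ≤ 0

namespace IsSupportPlane

variable {n : ℕ} {Ω : Set (Fin (n+1) → ℝ)} {p u v : Fin (n+1) → ℝ}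

lemma add (hu : IsSupportPlane Ω p u) (hv : IsSupportPlane Ω p v) :
    IsSupportPlane Ω p (u + v) := fun x hx => by
  rw [mink_add_right]; linarith [hu x hx, hv x hx]

lemma smul (hu : IsSupportPlane Ω p u) {c : ℝ} (hc : 0 ≤ c) : IsSupportPlane Ω p (c • u) :=
  fun x hx => by rw [mink_smul_right]; exact mul_nonpos_of_nonneg_of_nonpos hc (hu x hx)

lemma not_mem (hu : IsSupportPlane Ω p u) (hΩ : IsOpen Ω) (hu0 : 0 < u 0)
    {y : Fin (n+1) → ℝ} (hy : mink (y - p) u = 0) : y ∉ Ω := by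
  intro hyΩ
  have hlim : Tendsto (fun ε : ℝ => y - ε • Pi.single 0 1) (𝓝[>] 0) (𝓝 y) := by
    have : Continuous fun ε : ℝ => y - ε • (Pi.single 0 1 : Fin (n+1) → ℝ) := by fun_prop
    simpa using (this.tendsto 0).mono_left nhdsWithin_le_nhds
  obtain ⟨ε, hεΩ, hε⟩ :=
    ((hlim.eventually (hΩ.mem_nhds hyΩ)).and self_mem_nhdsWithin).exists
  have := hu _ (subset_closure hεΩ)
  rw [sub_right_comm, mink_sub_left, mink_smul_left, mink_single_zero_left, hy] at this
  nlinarith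

end IsSupportPlane

section NullHalfspaces

variable {n : ℕ} {Λ : Set ((Fin (n+1) → ℝ) × (Fin (n+1) → ℝ))} {Ω : Set (Fin (n+1) → ℝ)}
  {p x : Fin (n+1) → ℝ}

lemma closure_eq_setOf_mink_nonpos (hΛ : ∀ l ∈ Λ, NullFuture l.2)
    (hΩ : Ω = {x | ∀ l ∈ Λ, mink (x - l.1) l.2 < 0}) :
    closure Ω = {x | ∀ l ∈ Λ, mink (x - l.1) l.2 ≤ 0} := by
  refine (closure_minimal (fun x hx l hl => ((hΩ ▸ hx) l hl).le) ?_).antisymm fun x hx => ?_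
  · simp only [ofPred_forall]
    exact isClosed_biInter fun l _ => isClosed_le (by fun_prop) continuous_const
  · have hmem : ∀ s : ℝ, 0 < s → x + s • Pi.single 0 1 ∈ Ω := fun s hs => by
      rw [hΩ]
      intro l hl
      rw [add_sub_right_comm, mink_add_left, mink_smul_left, mink_single_zero_left]
      nlinarith [hx l hl, (hΛ l hl).2.2]
    have hlim : Tendsto (fun s : ℝ => x + s • Pi.single 0 1) (𝓝[>] 0) (𝓝 x) := by
      have : Continuous fun s : ℝ => x + s • (Pi.single 0 1 : Fin (n+1) → ℝ) := by fun_prop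
      simpa using (this.tendsto 0).mono_left nhdsWithin_le_nhds
    exact mem_closure_of_tendsto hlim (eventually_nhdsWithin_of_forall hmem)

lemma mink_sub_fst_nonpos_of_mem_closure (hΛ : ∀ l ∈ Λ, NullFuture l.2)
    (hΩ : Ω = {x | ∀ l ∈ Λ, mink (x - l.1) l.2 < 0}) {l : (Fin (n+1) → ℝ) × (Fin (n+1) → ℝ)}
    (hl : l ∈ Λ) (hx : x ∈ closure Ω) : mink (x - l.1) l.2 ≤ 0 :=
  (closure_eq_setOf_mink_nonpos hΛ hΩ ▸ hx) l hl

lemma mink_sub_le_of_mem_closure (hΛ : ∀ l ∈ Λ, NullFuture l.2)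
    (hΩ : Ω = {x | ∀ l ∈ Λ, mink (x - l.1) l.2 < 0}) {l : (Fin (n+1) → ℝ) × (Fin (n+1) → ℝ)}
    (hl : l ∈ Λ) (hx : x ∈ closure Ω) (p : Fin (n+1) → ℝ) :
    mink (x - p) l.2 ≤ -mink (p - l.1) l.2 := by
  rw [← sub_sub_sub_cancel_right x p l.1, mink_sub_left]
  linarith [mink_sub_fst_nonpos_of_mem_closure hΛ hΩ hl hx]

lemma add_mem_of_timelikeFuture (hΛ : ∀ l ∈ Λ, NullFuture l.2)
    (hΩ : Ω = {x | ∀ l ∈ Λ, mink (x - l.1) l.2 < 0}) (hp : p ∈ closure Ω)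
    {u : Fin (n+1) → ℝ} (hu : TimelikeFuture u) : p + u ∈ Ω := by
  rw [hΩ]
  intro l hl
  rw [add_sub_right_comm, mink_add_left]
  linarith [mink_sub_fst_nonpos_of_mem_closure hΛ hΩ hl hp,
    mink_neg_of_timelike_of_causal hu.1 hu.2 (hΛ l hl).1.le (hΛ l hl).2.2]

lemma add_smul_mem_frontier (hopen : IsOpen Ω) (hΛ : ∀ l ∈ Λ, NullFuture l.2)
    (hΩ : Ω = {x | ∀ l ∈ Λ, mink (x - l.1) l.2 < 0}) (hp : p ∈ closure Ω)
    {z : Fin (n+1) → ℝ} (hz : NullFuture z) (hsupp : IsSupportPlane Ω p z) {t : ℝ}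
    (ht : 0 ≤ t) : p + t • z ∈ frontier Ω := by
  rw [hopen.frontier_eq, closure_eq_setOf_mink_nonpos hΛ hΩ]
  refine ⟨fun l hl => ?_,
    hsupp.not_mem hopen hz.2.2 (by rw [add_sub_cancel_left, mink_smul_left, hz.1, mul_zero])⟩
  rw [add_sub_right_comm, mink_add_left, mink_smul_left]
  nlinarith [mink_sub_fst_nonpos_of_mem_closure hΛ hΩ hl hp,
    mink_nonpos_of_causal hz.1.le hz.2.2 (hΛ l hl).1.le (hΛ l hl).2.2]

/-- The null half-space cutting off `p + z` has its normal proportional to `z`. -/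
lemma isSupportPlane_of_add_not_mem (hΛ : ∀ l ∈ Λ, NullFuture l.2)
    (hΩ : Ω = {x | ∀ l ∈ Λ, mink (x - l.1) l.2 < 0}) (hp : p ∈ closure Ω)
    {z : Fin (n+1) → ℝ} (hz : NullFuture z) (hpz : p + z ∉ Ω) : IsSupportPlane Ω p z := by
  obtain ⟨l, hl, hge⟩ : ∃ l ∈ Λ, 0 ≤ mink (p + z - l.1) l.2 := by simpa [hΩ] using hpz
  rw [add_sub_right_comm, mink_add_left] at hge
  have hpl := mink_sub_fst_nonpos_of_mem_closure hΛ hΩ hl hp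
  have hzl := mink_nonpos_of_causal hz.1.le hz.2.2 (hΛ l hl).1.le (hΛ l hl).2.2
  have hsupp : IsSupportPlane Ω p l.2 := fun x hx => by
    linarith [mink_sub_le_of_mem_closure hΛ hΩ hl hx p]
  obtain ⟨s, hs, hls⟩ := exists_pos_smul_eq_of_mink_eq_zero hz (hΛ l hl) (by linarith)
  simpa [hls, hs.ne'] using hsupp.smul (inv_nonneg.2 hs.le)

lemma exists_nullFuture_isSupportPlane_mink_nonneg (hΛ : ∀ l ∈ Λ, NullFuture l.2)
    (hΩ : Ω = {x | ∀ l ∈ Λ, mink (x - l.1) l.2 < 0}) (hp : p ∈ closure Ω)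
    {d : Fin (n+1) → ℝ} (hd : ∀ t ∈ Ioc (0 : ℝ) 1, p + t • d ∉ Ω) :
    ∃ w, NullFuture w ∧ IsSupportPlane Ω p w ∧ 0 ≤ mink d w := by
  -- `(t, w) ∈ F`: `w` is a normalized null vector with `p + w^⊥` a support plane up to an error
  -- of `t * mink d w`. Such `w` exist for `t > 0` (the null hyperplane cutting off `p + t • d`),
  -- and compactness of `F` gives one with `t = 0`.
  let F : Set (ℝ × (Fin (n+1) → ℝ)) :=
    Icc 0 1 ×ˢ {z | mink z z = 0 ∧ z 0 = 1} ∩ {q | 0 ≤ mink d q.2} ∩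
      {q | ∀ x ∈ closure Ω, mink (x - p) q.2 ≤ q.1 * mink d q.2}
  have hF : IsCompact F := by
    have hK := isCompact_setOf_mink_self_eq_zero_apply_zero_eq_one (n := n)
    refine ((isCompact_Icc.prod hK).inter_right
      (isClosed_le continuous_const (by fun_prop))).inter_right ?_
    simp only [ofPred_forall]
    exact isClosed_biInter fun x _ => isClosed_le (by fun_prop) (by fun_prop)
  have hpos : Ioc (0 : ℝ) 1 ⊆ Prod.fst '' F := by
    intro t ht
    obtain ⟨l, hl, hlt⟩ : ∃ l ∈ Λ, 0 ≤ mink (p + t • d - l.1) l.2 := by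
      simpa [hΩ] using hd t ht
    rw [add_sub_right_comm, mink_add_left, mink_smul_left] at hlt
    have hc : 0 < (l.2 0)⁻¹ := inv_pos.2 (hΛ l hl).2.2
    have happrox : ∀ x ∈ closure Ω,
        mink (x - p) ((l.2 0)⁻¹ • l.2) ≤ t * mink d ((l.2 0)⁻¹ • l.2) := fun x hx => by
      rw [mink_smul_right, mink_smul_right]
      nlinarith [mink_sub_le_of_mem_closure hΛ hΩ hl hx p]
    have hdl : 0 ≤ mink d ((l.2 0)⁻¹ • l.2) :=
      nonneg_of_mul_nonneg_right (by simpa using happrox p hp) ht.1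
    refine ⟨(t, (l.2 0)⁻¹ • l.2), ⟨⟨⟨Ioc_subset_Icc_self ht, ?_, ?_⟩, hdl⟩, happrox⟩, rfl⟩
    · rw [mink_smul_left, mink_smul_right, (hΛ l hl).1, mul_zero, mul_zero]
    · simp [(hΛ l hl).2.2.ne']
  have hzero : (0 : ℝ) ∈ Prod.fst '' F :=
    (hF.image continuous_fst).isClosed.closure_subset_iff.2 hpos
      (by simp [closure_Ioc zero_ne_one])
  obtain ⟨⟨_, w⟩, ⟨⟨⟨-, hww, hw0 : w 0 = 1⟩, hdw⟩, hsupp⟩, rfl⟩ := hzero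
  exact ⟨w, ⟨hww, fun h => by simp [h] at hw0, hw0 ▸ one_pos⟩,
    fun x hx => by simpa using hsupp x hx, hdw⟩

lemma exists_two_nullFuture_isSupportPlane (hΛ : ∀ l ∈ Λ, NullFuture l.2)
    (hΩ : Ω = {x | ∀ l ∈ Λ, mink (x - l.1) l.2 < 0}) (hp : p ∈ closure Ω) (hpΩ : p ∉ Ω)
    {u : Fin (n+1) → ℝ} (hu : TimelikeFuture u) (hsupp : IsSupportPlane Ω p u) :
    ∃ v w, NullFuture v ∧ NullFuture w ∧ (∀ s : ℝ, w ≠ s • v) ∧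
      IsSupportPlane Ω p v ∧ IsSupportPlane Ω p w := by
  obtain ⟨v, hv, hsv, -⟩ :=
    exists_nullFuture_isSupportPlane_mink_nonneg hΛ hΩ hp (d := 0)
      fun t _ => by simpa using hpΩ
  have huv := mink_neg_of_timelike_of_causal hu.1 hu.2 hv.1.le hv.2.2
  set d := (2 * mink u u) • v - mink u v • u
  have hdu : 0 < mink d u := by
    rw [mink_sub_left, mink_smul_left, mink_smul_left, mink_comm v u]
    nlinarith [hu.1]
  have hdv : mink d v < 0 := by
    rw [mink_sub_left, mink_smul_left, mink_smul_left, hv.1]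
    nlinarith [mul_pos_of_neg_of_neg huv huv]
  have hd : ∀ t ∈ Ioc (0 : ℝ) 1, p + t • d ∉ Ω := fun t ht hmem => by
    have := hsupp _ (subset_closure hmem)
    rw [add_sub_cancel_left, mink_smul_left] at this
    nlinarith [ht.1]
  obtain ⟨w, hw, hsw, hdw⟩ := exists_nullFuture_isSupportPlane_mink_nonneg hΛ hΩ hp hd
  refine ⟨v, w, hv, hw, fun s hs => ?_, hsv, hsw⟩
  rw [hs, mink_smul_right] at hdw
  have hw0 := hw.2.2
  rw [hs, Pi.smul_apply, smul_eq_mul] at hw0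
  nlinarith [hv.2.2]

end NullHalfspaces

/-- Characterization of the singularity in the past: a point `p ∈ ∂Ω` of a future-complete
regular domain `Ω` belongs to the singularity `Σ = r(Ω)` (i.e. `p = r(q)` for some `q ∈ Ω`,
where `r(q)` is characterized by `q - r(q)` being future timelike with
`r(q) + (q - r(q))^⊥` a support plane) if and only if there exist at least two distinct
(non-proportional) future-directed null rays starting at `p` contained in `∂Ω`,
equivalently iff there is a future-directed timelike vector `u` with `p + u^⊥` a support
plane of `Ω`. -/
theorem singularity_characterization {n : ℕ}
    (Ω : Set (Fin (n+1) → ℝ)) (hΩ : IsRegularDomain Ω)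
    (p : Fin (n+1) → ℝ) (hp : p ∈ frontier Ω) :
    ((∃ q ∈ Ω, TimelikeFuture (q - p) ∧ ∀ x ∈ closure Ω, mink (x - p) (q - p) ≤ 0) ↔
      (∃ v w : Fin (n+1) → ℝ, NullFuture v ∧ NullFuture w ∧ (∀ s : ℝ, w ≠ s • v) ∧
        (∀ t : ℝ, 0 ≤ t → p + t • v ∈ frontier Ω) ∧
        (∀ t : ℝ, 0 ≤ t → p + t • w ∈ frontier Ω))) ∧
    ((∃ q ∈ Ω, TimelikeFuture (q - p) ∧ ∀ x ∈ closure Ω, mink (x - p) (q - p) ≤ 0) ↔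
      (∃ u : Fin (n+1) → ℝ, TimelikeFuture u ∧ ∀ x ∈ closure Ω, mink (x - p) u ≤ 0)) := by
  obtain ⟨hopen, -, Λ, hΛ, -, hΩΛ⟩ := hΩ
  rw [hopen.frontier_eq] at hp
  obtain ⟨hpcl, hpΩ⟩ := hp
  have hsingular : (∃ q ∈ Ω, TimelikeFuture (q - p) ∧ IsSupportPlane Ω p (q - p)) ↔
      ∃ u, TimelikeFuture u ∧ IsSupportPlane Ω p u :=
    ⟨fun ⟨q, _, hq, hs⟩ => ⟨q - p, hq, hs⟩, fun ⟨u, hu, hs⟩ =>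
      ⟨p + u, add_mem_of_timelikeFuture hΛ hΩΛ hpcl hu, by simpa using hu, by simpa using hs⟩⟩
  refine ⟨hsingular.trans ⟨fun ⟨u, hu, hsupp⟩ => ?_, fun ⟨v, w, hv, hw, hvw, hrv, hrw⟩ => ?_⟩,
    hsingular⟩
  · obtain ⟨v, w, hv, hw, hvw, hsv, hsw⟩ :=
      exists_two_nullFuture_isSupportPlane hΛ hΩΛ hpcl hpΩ hu hsupp
    exact ⟨v, w, hv, hw, hvw, fun t => add_smul_mem_frontier hopen hΛ hΩΛ hpcl hv hsv,
      fun t => add_smul_mem_frontier hopen hΛ hΩΛ hpcl hw hsw⟩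
  · have hray : ∀ z, NullFuture z → (∀ t : ℝ, 0 ≤ t → p + t • z ∈ frontier Ω) →
        IsSupportPlane Ω p z := fun z hz hr =>
      isSupportPlane_of_add_not_mem hΛ hΩΛ hpcl hz
        (one_smul ℝ z ▸ (hopen.frontier_eq ▸ hr 1 zero_le_one).2)
    exact ⟨v + w, TimelikeFuture.add_of_nullFuture hv hw hvw,
      (hray v hv hrv).add (hray w hw hrw)⟩
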